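/- arXiv:1408.4779 — 3 statements merged into one kernel-verified Lean document; each statement's English description precedes it below -/
import Mathlib

section
/- If g and g' are positive definite inner products on a real vector space V with induced norms |·| and |·|', and λ ≥ 1 satisfies (1/λ)|v|' ≤ |v| ≤ λ|v|' for all v ∈ V, then the bilinear form g − g' has operator norm at most λ² − λ⁻² with respect to g; that is, |(g−g')(v,w)| ≤ (λ² − λ⁻²)|v||w| for all v, w ∈ V. -/
/-!
Write `h = g - g'`. Squaring the comparison of norms gives `λ⁻² g ≤ g' ≤ λ² g` on the diagonal,
hence `|h(u,u)| ≤ (λ² - λ⁻²) g(u,u)`. A symmetric form bounded on the diagonal by `c g` is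
bounded by `c |v| |w|` everywhere: polarize at `P = |w| v + |v| w` and `Q = |w| v - |v| w`,
so that `4 |v| |w| h(v,w) = h(P,P) - h(Q,Q)`, and by the parallelogram law
`g(P,P) + g(Q,Q) = 4 |v|² |w|²`.
-/

section Bilinear

variable {V : Type*} [AddCommGroup V] [Module ℝ V]

theorem bilin_polarization_smul (h : V →ₗ[ℝ] V →ₗ[ℝ] ℝ) (hh : ∀ v w : V, h v w = h w v)
    (a b : ℝ) (v w : V) :
    h (a • v + b • w) (a • v + b • w) - h (a • v - b • w) (a • v - b • w) =
      4 * (a * b) * h v w := by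
  simp only [map_add, map_sub, map_smul, LinearMap.add_apply, LinearMap.sub_apply,
    LinearMap.smul_apply, smul_eq_mul]
  rw [hh w v]
  ring

theorem bilin_parallelogram_smul (g : V →ₗ[ℝ] V →ₗ[ℝ] ℝ) (a b : ℝ) (v w : V) :
    g (a • v + b • w) (a • v + b • w) + g (a • v - b • w) (a • v - b • w) =
      2 * (a ^ 2 * g v v + b ^ 2 * g w w) := by
  simp only [map_add, map_sub, map_smul, LinearMap.add_apply, LinearMap.sub_apply,
    LinearMap.smul_apply, smul_eq_mul]
  ring

theorem abs_apply_le_mul_sqrt_of_abs_apply_self_le (h g : V →ₗ[ℝ] V →ₗ[ℝ] ℝ)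
    (hh : ∀ v w : V, h v w = h w v) (hg_pos : ∀ v : V, v ≠ 0 → 0 < g v v) (c : ℝ)
    (hc : ∀ u : V, |h u u| ≤ c * g u u) (v w : V) :
    |h v w| ≤ c * (Real.sqrt (g v v) * Real.sqrt (g w w)) := by
  rcases eq_or_ne v 0 with rfl | hv
  · simp
  rcases eq_or_ne w 0 with rfl | hw
  · simp
  set s := Real.sqrt (g v v)
  set r := Real.sqrt (g w w)
  have hs : s ^ 2 = g v v := Real.sq_sqrt (hg_pos v hv).le
  have hr : r ^ 2 = g w w := Real.sq_sqrt (hg_pos w hw).le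
  have hrs : 0 < 4 * (r * s) := by
    have := Real.sqrt_pos.mpr (hg_pos v hv)
    have := Real.sqrt_pos.mpr (hg_pos w hw)
    positivity
  set P := r • v + s • w
  set Q := r • v - s • w
  refine le_of_mul_le_mul_left ?_ hrs
  calc 4 * (r * s) * |h v w| = |h P P - h Q Q| := by
        rw [bilin_polarization_smul h hh, abs_mul, abs_of_pos hrs]
    _ ≤ |h P P| + |h Q Q| := abs_sub _ _
    _ ≤ c * g P P + c * g Q Q := add_le_add (hc P) (hc Q)
    _ = 4 * (r * s) * (c * (s * r)) := by
        rw [← mul_add, bilin_parallelogram_smul, ← hs, ← hr]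
        ring

end Bilinear

theorem le_sq_mul_of_sqrt_le_mul_sqrt {a b lam : ℝ} (hb : 0 ≤ b) (hlam : 0 ≤ lam)
    (h : Real.sqrt a ≤ lam * Real.sqrt b) : a ≤ lam ^ 2 * b := by
  rwa [Real.sqrt_le_left (by positivity), mul_pow, Real.sq_sqrt hb] at h

theorem abs_sub_le_of_sqrt_comparison {a b lam : ℝ} (ha : 0 ≤ a) (hb : 0 ≤ b) (hlam : 1 ≤ lam)
    (h₁ : lam⁻¹ * Real.sqrt b ≤ Real.sqrt a) (h₂ : Real.sqrt a ≤ lam * Real.sqrt b) :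
    |a - b| ≤ (lam ^ 2 - lam⁻¹ ^ 2) * a := by
  have hlam0 : 0 < lam := by linarith
  have hab : a ≤ lam ^ 2 * b := le_sq_mul_of_sqrt_le_mul_sqrt hb hlam0.le h₂
  have hba : b ≤ lam ^ 2 * a := by
    refine le_sq_mul_of_sqrt_le_mul_sqrt ha hlam0.le ?_
    rwa [inv_mul_le_iff₀ hlam0] at h₁
  have hinv : lam⁻¹ ^ 2 * lam ^ 2 = 1 := by field_simp
  have hinv_le : lam⁻¹ ^ 2 ≤ 1 := pow_le_one₀ (by positivity) (inv_le_one_of_one_le₀ hlam)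
  have hlam_sq : 1 ≤ lam ^ 2 := one_le_pow₀ hlam
  rw [abs_le]
  constructor <;> nlinarith [mul_le_mul_of_nonneg_left hab (sq_nonneg lam⁻¹)]

theorem bilinear_difference_bound {V : Type*} [AddCommGroup V] [Module ℝ V]
    (g g' : V →ₗ[ℝ] V →ₗ[ℝ] ℝ)
    (hg_symm : ∀ v w : V, g v w = g w v)
    (hg_pos : ∀ v : V, v ≠ 0 → 0 < g v v)
    (hg'_symm : ∀ v w : V, g' v w = g' w v)
    (hg'_pos : ∀ v : V, v ≠ 0 → 0 < g' v v)
    (lam : ℝ) (hlam : 1 ≤ lam)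
    (hcomp : ∀ v : V,
      lam⁻¹ * Real.sqrt (g' v v) ≤ Real.sqrt (g v v) ∧
      Real.sqrt (g v v) ≤ lam * Real.sqrt (g' v v)) :
    ∀ v w : V,
      |g v w - g' v w| ≤ (lam ^ 2 - lam⁻¹ ^ 2) *
        (Real.sqrt (g v v) * Real.sqrt (g w w)) := by
  have nonneg_of_pos {B : V →ₗ[ℝ] V →ₗ[ℝ] ℝ} (hB : ∀ v : V, v ≠ 0 → 0 < B v v) (u : V) :
      0 ≤ B u u := by
    rcases eq_or_ne u 0 with rfl | hu
    · simp
    · exact (hB u hu).le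
  have h_symm : ∀ v w : V, (g - g') v w = (g - g') w v := fun v w => by
    simp only [LinearMap.sub_apply, hg_symm v w, hg'_symm v w]
  have h_diag : ∀ u : V, |(g - g') u u| ≤ (lam ^ 2 - lam⁻¹ ^ 2) * g u u := fun u =>
    abs_sub_le_of_sqrt_comparison (nonneg_of_pos hg_pos u) (nonneg_of_pos hg'_pos u) hlam
      (hcomp u).1 (hcomp u).2
  exact abs_apply_le_mul_sqrt_of_abs_apply_self_le (g - g') g h_symm hg_pos _ h_diag
end

section
/- Let φ : M → N be a C² map between Riemannian manifolds, r > 0 and μ ≥ 0. If the second tangent map φ_** : T(TM) → T(TN) satisfies |φ_**ξ| ≤ μ at every point ξ ∈ TM with |ξ| ≤ r (norms taken with respect to the Sasaki metrics), then |φ_*| ≤ μ everywhere on M, and the second fundamental tensor A_φ, defined by A_φ(ζ⊗ξ) = ∇'_ζ(φ_*X) − φ_*(∇_ζ X) for any local vector field X with X(x)=ξ, satisfies |A_φ| ≤ μ/r. -/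
/-!
The hypothesis is the bound on `φ_**` written through the horizontal–vertical splitting, pointwise
over the tangent spaces: `E x = T_xM`, `F x = T_{φ x}N`, `L x = φ_{*x}` and `A x ζ ξ = A_φ(ζ⊗ξ)`.

Applying `φ_**ξ` to horizontal vectors `(ζ, 0)` gives `|(φ_*ζ, A_φ(ζ⊗ξ))| ≤ μ|ζ|` whenever
`|ξ| ≤ r`, so each component is bounded by `μ|ζ|`. At `ξ = 0` this is the bound on `φ_*`; since
`A_φ(ζ⊗ξ)` is linear in `ξ`, rescaling `ξ` to length `r` turns the second bound into
`|A_φ(ζ⊗ξ)| ≤ (μ/r)|ζ||ξ|`.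
-/

theorem Real.abs_le_sqrt_sq_add_sq_left (a b : ℝ) : |a| ≤ √(a ^ 2 + b ^ 2) :=
  Real.abs_le_sqrt (le_add_of_nonneg_right (sq_nonneg b))

theorem Real.abs_le_sqrt_sq_add_sq_right (a b : ℝ) : |b| ≤ √(a ^ 2 + b ^ 2) :=
  Real.abs_le_sqrt (le_add_of_nonneg_left (sq_nonneg a))

theorem LinearMap.norm_le_div_mul_of_sphere_bound {E F : Type*}
    [NormedAddCommGroup E] [NormedSpace ℝ E] [SeminormedAddCommGroup F] [NormedSpace ℝ F]
    (f : E →ₗ[ℝ] F) {r c : ℝ} (hr : 0 < r) (hf : ∀ ξ, ‖ξ‖ = r → ‖f ξ‖ ≤ c) (ξ : E) :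
    ‖f ξ‖ ≤ c / r * ‖ξ‖ := by
  rcases eq_or_ne ξ 0 with rfl | hξ
  · simp
  have hξ : 0 < ‖ξ‖ := norm_pos_iff.2 hξ
  have hscaled : ‖(r / ‖ξ‖) • ξ‖ = r := by
    rw [norm_smul, Real.norm_of_nonneg (by positivity)]
    field_simp
  have hbound := hf _ hscaled
  rw [map_smul, norm_smul, Real.norm_of_nonneg (by positivity), div_mul_eq_mul_div,
    div_le_iff₀ hξ] at hbound
  rw [div_mul_eq_mul_div, le_div_iff₀ hr]
  linarith

theorem dilation_and_second_fundamental_bound_of_second_tangent_bound_general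
    {X : Type*} (E F : X → Type*)
    [∀ x, NormedAddCommGroup (E x)] [∀ x, InnerProductSpace ℝ (E x)]
    [∀ x, NormedAddCommGroup (F x)] [∀ x, InnerProductSpace ℝ (F x)]
    (L : ∀ x, E x →ₗ[ℝ] F x)
    (A : ∀ x, E x →ₗ[ℝ] E x →ₗ[ℝ] F x)
    (r μ : ℝ) (hr : 0 < r)
    (h : ∀ (x : X) (ξ : E x), ‖ξ‖ ≤ r → ∀ ζ₁ ζ₂ : E x,
      Real.sqrt (‖L x ζ₁‖ ^ 2 + ‖L x ζ₂ + A x ζ₁ ξ‖ ^ 2) ≤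
        μ * Real.sqrt (‖ζ₁‖ ^ 2 + ‖ζ₂‖ ^ 2)) :
    (∀ (x : X) (ζ : E x), ‖L x ζ‖ ≤ μ * ‖ζ‖) ∧
    (∀ (x : X) (ζ ξ : E x), ‖A x ζ ξ‖ ≤ (μ / r) * (‖ζ‖ * ‖ξ‖)) := by
  have horizontal : ∀ (x : X) (ξ : E x), ‖ξ‖ ≤ r → ∀ ζ : E x,
      √(‖L x ζ‖ ^ 2 + ‖A x ζ ξ‖ ^ 2) ≤ μ * ‖ζ‖ := by
    intro x ξ hξ ζ
    simpa using h x ξ hξ ζ 0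
  refine ⟨fun x ζ => ?_, fun x ζ ξ => ?_⟩
  · simpa using (Real.abs_le_sqrt_sq_add_sq_left _ _).trans
      (horizontal x 0 (by simpa using hr.le) ζ)
  · calc ‖A x ζ ξ‖ ≤ μ * ‖ζ‖ / r * ‖ξ‖ :=
          (A x ζ).norm_le_div_mul_of_sphere_bound hr (fun ξ hξ => by
            simpa using (Real.abs_le_sqrt_sq_add_sq_right _ _).trans
              (horizontal x ξ hξ.le ζ)) ξ
      _ = μ / r * (‖ζ‖ * ‖ξ‖) := by ring

theorem dilation_and_second_fundamental_bound_of_second_tangent_bound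
    {X : Type*} (E F : X → Type*)
    [∀ x, NormedAddCommGroup (E x)] [∀ x, InnerProductSpace ℝ (E x)]
    [∀ x, NormedAddCommGroup (F x)] [∀ x, InnerProductSpace ℝ (F x)]
    (L : ∀ x, E x →ₗ[ℝ] F x)
    (A : ∀ x, E x →ₗ[ℝ] E x →ₗ[ℝ] F x)
    (r μ : ℝ) (hr : 0 < r) (hμ : 0 ≤ μ)
    (h : ∀ (x : X) (ξ : E x), ‖ξ‖ ≤ r → ∀ ζ₁ ζ₂ : E x,
      Real.sqrt (‖L x ζ₁‖ ^ 2 + ‖L x ζ₂ + A x ζ₁ ξ‖ ^ 2) ≤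
        μ * Real.sqrt (‖ζ₁‖ ^ 2 + ‖ζ₂‖ ^ 2)) :
    (∀ (x : X) (ζ : E x), ‖L x ζ‖ ≤ μ * ‖ζ‖) ∧
    (∀ (x : X) (ζ ξ : E x), ‖A x ζ ξ‖ ≤ (μ / r) * (‖ζ‖ * ‖ξ‖)) :=
  dilation_and_second_fundamental_bound_of_second_tangent_bound_general E F L A r μ hr h
end

section
/- Let φ : M → N be a C² map between Riemannian manifolds, r > 0 and ν, K ≥ 0. If |φ_*| ≤ ν everywhere and |A_φ| ≤ K everywhere, then |φ_**ξ| ≤ √2(ν + Kr) for every ξ ∈ TM with |ξ| ≤ r, where φ_** is the tangent map of φ_* : TM → TN with respect to the Sasaki metrics. -/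
/-!
In the horizontal–vertical splitting the second tangent map is the lower-triangular block operator
`(ζ₁, ζ₂) ↦ (φ_* ζ₁, φ_* ζ₂ + A_φ(ζ₁ ⊗ ξ))`, and the Sasaki norm is the `L²` norm of the two
components. Splitting it as the diagonal part `(φ_* ζ₁, φ_* ζ₂)`, of norm at most `ν`, plus the
off-diagonal part `(0, A_φ(ζ₁ ⊗ ξ))`, of norm at most `K |ξ| ≤ K r`, the triangle inequality bounds
its norm by `ν + K r`, which is even better than `√2 (ν + K r)`.
-/

open WithLp

section TriangularBlock

variable {E E' F F' : Type*} [SeminormedAddCommGroup E] [SeminormedAddCommGroup E']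
  [SeminormedAddCommGroup F] [SeminormedAddCommGroup F']

theorem norm_toLp_pair_le {f : E → F} {g : E' → F'} {ν : ℝ} (hν : 0 ≤ ν)
    (hf : ∀ u, ‖f u‖ ≤ ν * ‖u‖) (hg : ∀ v, ‖g v‖ ≤ ν * ‖v‖) (z : WithLp 2 (E × E')) :
    ‖toLp 2 (f z.fst, g z.snd)‖ ≤ ν * ‖z‖ := by
  have hsq : ‖f z.fst‖ ^ 2 + ‖g z.snd‖ ^ 2 ≤ (ν * ‖z‖) ^ 2 := by
    rw [mul_pow, prod_norm_sq_eq_of_L2, mul_add, ← mul_pow, ← mul_pow]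
    gcongr
    exacts [hf _, hg _]
  rw [prod_norm_eq_of_L2]
  exact Real.sqrt_le_iff.mpr ⟨by positivity, hsq⟩

theorem norm_toLp_triangular_le {f : E → F} {g : E' → F'} {b : E → F'} {ν μ : ℝ}
    (hν : 0 ≤ ν) (hμ : 0 ≤ μ) (hf : ∀ u, ‖f u‖ ≤ ν * ‖u‖) (hg : ∀ v, ‖g v‖ ≤ ν * ‖v‖)
    (hb : ∀ u, ‖b u‖ ≤ μ * ‖u‖) (z : WithLp 2 (E × E')) :
    ‖toLp 2 (f z.fst, g z.snd + b z.fst)‖ ≤ (ν + μ) * ‖z‖ := by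
  have hsplit : toLp 2 (f z.fst, g z.snd + b z.fst) =
      toLp 2 (f z.fst, g z.snd) + toLp 2 ((0 : F), b z.fst) := by
    simp only [← toLp_add, Prod.mk_add_mk, add_zero]
  have hoff : ‖toLp 2 ((0 : F), b z.fst)‖ ≤ μ * ‖z‖ := by
    rw [norm_toLp_snd]
    exact (hb _).trans (mul_le_mul_of_nonneg_left (WithLp.norm_fst_le _ z) hμ)
  calc ‖toLp 2 (f z.fst, g z.snd + b z.fst)‖
      ≤ ‖toLp 2 (f z.fst, g z.snd)‖ + ‖toLp 2 ((0 : F), b z.fst)‖ := hsplit ▸ norm_add_le _ _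
    _ ≤ ν * ‖z‖ + μ * ‖z‖ := add_le_add (norm_toLp_pair_le hν hf hg z) hoff
    _ = (ν + μ) * ‖z‖ := (add_mul _ _ _).symm

end TriangularBlock

theorem second_tangent_bound_of_dilation_and_second_fundamental_bound_general
    {X : Type*} (E F : X → Type*)
    [∀ x, NormedAddCommGroup (E x)] [∀ x, InnerProductSpace ℝ (E x)]
    [∀ x, NormedAddCommGroup (F x)] [∀ x, InnerProductSpace ℝ (F x)]
    (L : ∀ x, E x →ₗ[ℝ] F x)
    (A : ∀ x, E x →ₗ[ℝ] E x →ₗ[ℝ] F x)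
    (r ν K : ℝ) (hν : 0 ≤ ν) (hK : 0 ≤ K)
    (hL : ∀ (x : X) (ζ : E x), ‖L x ζ‖ ≤ ν * ‖ζ‖)
    (hA : ∀ (x : X) (ζ ξ : E x), ‖A x ζ ξ‖ ≤ K * (‖ζ‖ * ‖ξ‖)) :
    ∀ (x : X) (ξ : E x), ‖ξ‖ ≤ r → ∀ ζ₁ ζ₂ : E x,
      Real.sqrt (‖L x ζ₁‖ ^ 2 + ‖L x ζ₂ + A x ζ₁ ξ‖ ^ 2) ≤
        Real.sqrt 2 * (ν + K * r) * Real.sqrt (‖ζ₁‖ ^ 2 + ‖ζ₂‖ ^ 2) := by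
  intro x ξ hξ ζ₁ ζ₂
  have hKr : 0 ≤ K * r := mul_nonneg hK ((norm_nonneg ξ).trans hξ)
  have hAξ (ζ : E x) : ‖A x ζ ξ‖ ≤ K * r * ‖ζ‖ := by
    calc ‖A x ζ ξ‖ ≤ K * (‖ζ‖ * ‖ξ‖) := hA x ζ ξ
      _ ≤ K * (‖ζ‖ * r) := by gcongr
      _ = K * r * ‖ζ‖ := by ring
  have hblock := norm_toLp_triangular_le hν hKr (hL x) (hL x) hAξ (toLp 2 (ζ₁, ζ₂))
  simp only [prod_norm_eq_of_L2, toLp_fst, toLp_snd] at hblock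
  calc _ ≤ (ν + K * r) * Real.sqrt (‖ζ₁‖ ^ 2 + ‖ζ₂‖ ^ 2) := hblock
    _ ≤ Real.sqrt 2 * (ν + K * r) * Real.sqrt (‖ζ₁‖ ^ 2 + ‖ζ₂‖ ^ 2) := by
      gcongr
      exact le_mul_of_one_le_left (by positivity) Real.one_lt_sqrt_two.le

theorem second_tangent_bound_of_dilation_and_second_fundamental_bound
    {X : Type*} (E F : X → Type*)
    [∀ x, NormedAddCommGroup (E x)] [∀ x, InnerProductSpace ℝ (E x)]
    [∀ x, NormedAddCommGroup (F x)] [∀ x, InnerProductSpace ℝ (F x)]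
    (L : ∀ x, E x →ₗ[ℝ] F x)
    (A : ∀ x, E x →ₗ[ℝ] E x →ₗ[ℝ] F x)
    (r ν K : ℝ) (hr : 0 < r) (hν : 0 ≤ ν) (hK : 0 ≤ K)
    (hL : ∀ (x : X) (ζ : E x), ‖L x ζ‖ ≤ ν * ‖ζ‖)
    (hA : ∀ (x : X) (ζ ξ : E x), ‖A x ζ ξ‖ ≤ K * (‖ζ‖ * ‖ξ‖)) :
    ∀ (x : X) (ξ : E x), ‖ξ‖ ≤ r → ∀ ζ₁ ζ₂ : E x,
      Real.sqrt (‖L x ζ₁‖ ^ 2 + ‖L x ζ₂ + A x ζ₁ ξ‖ ^ 2) ≤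
        Real.sqrt 2 * (ν + K * r) * Real.sqrt (‖ζ₁‖ ^ 2 + ‖ζ₂‖ ^ 2) :=
  second_tangent_bound_of_dilation_and_second_fundamental_bound_general E F L A r ν K hν hK hL hA
end
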